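/- arXiv:2008.01986 — 2 statements merged into one kernel-verified Lean document; each statement's English description precedes it below -/
import Mathlib

section
/- Let f be bounded measurable on [0,1] and fix y₀ ∈ (0,1). For x > 0 and A > 0 with y₀ + Ax < 1, the integral ∫_{y₀+Ax}^{1} f(σ)·σ·x·y₀ / ([x² + (y₀-σ)²][x² + (y₀+σ)²]) dσ is bounded in absolute value by (π²/12)·‖f‖_∞ / A. -/
open scoped Real

/-- The estimate for `I₁₁₂`: for bounded measurable `f` on `[0,1]`, `y₀ ∈ (0,1)`,
`x > 0`, `A > 0` with `y₀ + Ax < 1`,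
`|∫_{y₀+Ax}^{1} f(σ)·σ·x·y₀ / ([x² + (y₀-σ)²][x² + (y₀+σ)²]) dσ| ≤ (π²/12)·‖f‖_∞/A`. -/
theorem stmt_5 (f : ℝ → ℝ) (hf : Measurable f) (B : ℝ)
    (hB : ∀ σ ∈ Set.Icc (0:ℝ) 1, |f σ| ≤ B)
    (y₀ x A : ℝ) (hy₀ : y₀ ∈ Set.Ioo (0:ℝ) 1) (hx : 0 < x) (hA : 0 < A)
    (hlt : y₀ + A * x < 1) :
    |∫ σ in (y₀ + A * x)..1,
        f σ * σ * x * y₀ / ((x ^ 2 + (y₀ - σ) ^ 2) * (x ^ 2 + (y₀ + σ) ^ 2))|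
      ≤ (π ^ 2 / 12) * B / A := by
  obtain ⟨hy0, hy1⟩ := hy₀
  have hB0 : 0 ≤ B := (abs_nonneg _).trans (hB 1 ⟨zero_le_one, le_refl 1⟩)
  set a := y₀ + A * x with ha
  have hax : 0 < A * x := mul_pos hA hx
  have haley : y₀ < a := by simp [ha]; linarith
  have ha1 : a ≤ 1 := hlt.le
  -- the dominating function
  set g : ℝ → ℝ := fun σ => B * x / (4 * (σ - y₀) ^ 2) with hg
  have hgint : IntervalIntegrable g MeasureTheory.volume a 1 := by
    apply ContinuousOn.intervalIntegrable
    apply ContinuousOn.div continuousOn_const (by fun_prop)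
    intro t ht
    rw [Set.uIcc_of_le ha1] at ht
    have h0 : y₀ < t := lt_of_lt_of_le haley ht.1
    exact ne_of_gt (mul_pos four_pos (pow_pos (by linarith) 2))
  have hbound : ∀ t ∈ Set.uIoc a 1,
      ‖f t * t * x * y₀ / ((x ^ 2 + (y₀ - t) ^ 2) * (x ^ 2 + (y₀ + t) ^ 2))‖ ≤ g t := by
    intro t ht
    rw [Set.uIoc_of_le ha1] at ht
    have ht0 : y₀ < t := lt_of_lt_of_le haley ht.1.le
    have hft : |f t| ≤ B := hB t ⟨by linarith, ht.2⟩
    have hD1 : (0:ℝ) < x ^ 2 + (y₀ - t) ^ 2 := by positivity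
    have hD2 : (0:ℝ) < x ^ 2 + (y₀ + t) ^ 2 := by positivity
    rw [Real.norm_eq_abs, abs_div, abs_of_pos (mul_pos hD1 hD2), hg]
    rw [div_le_div_iff₀ (mul_pos hD1 hD2) (mul_pos four_pos (pow_pos (by linarith : (0:ℝ) < t - y₀) 2))]
    have habs : |f t * t * x * y₀| = |f t| * t * x * y₀ := by
      rw [abs_mul, abs_mul, abs_mul, abs_of_pos (by linarith : (0:ℝ) < t),
        abs_of_pos hx, abs_of_pos hy0]
    rw [habs]
    have h1 : (t - y₀) ^ 2 ≤ x ^ 2 + (y₀ - t) ^ 2 := by nlinarith [sq_nonneg x]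
    have h2 : 4 * t * y₀ ≤ x ^ 2 + (y₀ + t) ^ 2 := by nlinarith [sq_nonneg (y₀ - t), sq_nonneg x]
    have ht0' : (0:ℝ) < t := by linarith
    calc |f t| * t * x * y₀ * (4 * (t - y₀) ^ 2)
        ≤ B * t * x * y₀ * (4 * (t - y₀) ^ 2) := by
          have := mul_le_mul_of_nonneg_right hft
            (by positivity : (0:ℝ) ≤ t * x * y₀ * (4 * (t - y₀) ^ 2))
          nlinarith [this]
      _ = B * x * ((t - y₀) ^ 2 * (4 * t * y₀)) := by ring
      _ ≤ B * x * ((x ^ 2 + (y₀ - t) ^ 2) * (x ^ 2 + (y₀ + t) ^ 2)) := by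
          apply mul_le_mul_of_nonneg_left _ (mul_nonneg hB0 hx.le)
          exact mul_le_mul h1 h2 (by positivity) hD1.le
  have key := intervalIntegral.norm_integral_le_abs_of_norm_le
    (f := fun σ => f σ * σ * x * y₀ / ((x ^ 2 + (y₀ - σ) ^ 2) * (x ^ 2 + (y₀ + σ) ^ 2)))
    (μ := MeasureTheory.volume) (a := a) (b := 1)
    (MeasureTheory.ae_restrict_of_forall_mem measurableSet_uIoc hbound) hgint
  rw [Real.norm_eq_abs] at key
  refine key.trans ?_
  -- compute the integral of g
  have hcomp : (∫ σ in a..1, g σ) = B * x / 4 * ((A * x)⁻¹ - (1 - y₀)⁻¹) := by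
    have e1 : (∫ σ in a..1, g σ) = B * x / 4 * ∫ σ in a..1, ((σ - y₀) ^ 2)⁻¹ := by
      rw [← intervalIntegral.integral_const_mul]
      congr 1; ext σ; rw [hg]; simp only [div_eq_mul_inv, mul_inv]; ring
    have e2 : (∫ σ in a..1, ((σ - y₀) ^ 2)⁻¹) = ∫ t in (a - y₀)..(1 - y₀), (t ^ 2)⁻¹ := by
      rw [← intervalIntegral.integral_comp_sub_right (fun t => ((t:ℝ) ^ 2)⁻¹) y₀]
    have e3 : (∫ t in (a - y₀)..(1 - y₀), ((t:ℝ) ^ 2)⁻¹)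
        = ∫ t in (a - y₀)..(1 - y₀), (t:ℝ) ^ (-2 : ℤ) := by
      congr 1
    have hnot : (0:ℝ) ∉ Set.uIcc (a - y₀) (1 - y₀) := by
      rw [Set.uIcc_of_le (by linarith)]
      intro h0
      have := h0.1; linarith
    have e4 := integral_zpow (a := a - y₀) (b := 1 - y₀) (n := -2)
      (Or.inr ⟨by decide, hnot⟩)
    have hay : a - y₀ = A * x := by rw [ha]; ring
    rw [e1, e2, e3, e4, hay]
    norm_num
    exact Or.inl (by ring)
  rw [hcomp]
  have hinv : (A * x)⁻¹ - (1 - y₀)⁻¹ ≤ (A * x)⁻¹ := by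
    have : 0 < (1 - y₀)⁻¹ := inv_pos.mpr (by linarith)
    linarith
  have hval : B * x / 4 * ((A * x)⁻¹ - (1 - y₀)⁻¹) ≤ B / (4 * A) := by
    have hle : B * x / 4 * ((A * x)⁻¹ - (1 - y₀)⁻¹) ≤ B * x / 4 * (A * x)⁻¹ :=
      mul_le_mul_of_nonneg_left hinv (by positivity)
    refine hle.trans_eq ?_
    field_simp
  have habs : |B * x / 4 * ((A * x)⁻¹ - (1 - y₀)⁻¹)| = B * x / 4 * ((A * x)⁻¹ - (1 - y₀)⁻¹) := by
    apply abs_of_nonneg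
    apply mul_nonneg (by positivity)
    have : (1 - y₀)⁻¹ ≤ (A * x)⁻¹ := by
      apply inv_anti₀ hax (by linarith)
    linarith
  rw [habs]
  refine hval.trans ?_
  have hpi : (3:ℝ) < π := Real.pi_gt_three
  have hpi2 : (3:ℝ) ≤ π ^ 2 := by nlinarith
  rw [div_le_div_iff₀ (by positivity) hA, div_mul_eq_mul_div, div_mul_eq_mul_div,
    le_div_iff₀ (by norm_num)]
  nlinarith [mul_nonneg hB0 hA.le]
end

section
/- Let G be a closed additive subgroup of ℝ³ whose projection to the first two coordinates is ℤ², and which is a proper subgroup of ℤ² × ℝ. Suppose G ∩ ({(0,0)} × ℝ) is a proper closed subgroup of {(0,0)} × ℝ. Then there exists α ≥ 0 such that G ∩ ({(0,0)} × ℝ) = {(0,0)} × αℤ, and there exist β, γ ∈ ℝ with e₁ = (0,0,α), e₂ = (1,0,β), e₃ = (0,1,γ) ∈ G, and G is generated as a closed subgroup by e₁, e₂, e₃. -/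
/-- Let `G` be a closed additive subgroup of `ℝ³` contained in `ℤ² × ℝ`, proper in
`ℤ² × ℝ`, whose projection to the first two coordinates is all of `ℤ²`, and whose fiber
over `(0,0)` is a proper closed subgroup of `ℝ`. Then there is `α ≥ 0` with
`G ∩ ({(0,0)} × ℝ) = {(0,0)} × αℤ`, and there are `β, γ` with
`e₁ = (0,0,α), e₂ = (1,0,β), e₃ = (0,1,γ) ∈ G` generating `G` as a closed subgroup. -/
theorem stmt_15 (G : AddSubgroup (ℝ × ℝ × ℝ))
    (hclosed : IsClosed (G : Set (ℝ × ℝ × ℝ)))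
    (hsub : (G : Set (ℝ × ℝ × ℝ)) ⊆ {v | (∃ a : ℤ, v.1 = (a:ℝ)) ∧ (∃ b : ℤ, v.2.1 = (b:ℝ))})
    (hproper : (G : Set (ℝ × ℝ × ℝ)) ≠ {v | (∃ a : ℤ, v.1 = (a:ℝ)) ∧ (∃ b : ℤ, v.2.1 = (b:ℝ))})
    (hproj : ∀ a b : ℤ, ∃ z : ℝ, ((a:ℝ), (b:ℝ), z) ∈ G)
    (hfib : {z : ℝ | ((0:ℝ), (0:ℝ), z) ∈ G} ≠ Set.univ) :
    ∃ α : ℝ, 0 ≤ α ∧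
      {z : ℝ | ((0:ℝ), (0:ℝ), z) ∈ G} = {z : ℝ | ∃ m : ℤ, z = (m:ℝ) * α} ∧
      ∃ β γ : ℝ, ((0:ℝ), (0:ℝ), α) ∈ G ∧ ((1:ℝ), (0:ℝ), β) ∈ G ∧ ((0:ℝ), (1:ℝ), γ) ∈ G ∧
        (AddSubgroup.closure
            ({((0:ℝ), (0:ℝ), α), ((1:ℝ), (0:ℝ), β), ((0:ℝ), (1:ℝ), γ)} :
              Set (ℝ × ℝ × ℝ))).topologicalClosure = G := by
  -- the inclusion map z ↦ (0,0,z)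
  set f : ℝ →+ (ℝ × ℝ × ℝ) :=
    { toFun := fun z => ((0:ℝ), (0:ℝ), z)
      map_zero' := rfl
      map_add' := by intro x y; simp } with hf
  set H : AddSubgroup ℝ := G.comap f with hH
  have hHset : (H : Set ℝ) = {z : ℝ | ((0:ℝ), (0:ℝ), z) ∈ G} := rfl
  have hHclosed : IsClosed (H : Set ℝ) := by
    have : Continuous f := by
      apply continuous_const.prodMk (continuous_const.prodMk continuous_id)
    exact hclosed.preimage this
  -- H is cyclic
  obtain ⟨a, ha⟩ : ∃ a : ℝ, H = AddSubgroup.closure {a} := by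
    rcases AddSubgroup.dense_or_cyclic H with h | h
    · exact absurd (hHclosed.closure_eq ▸ h.closure_eq) (by simpa [hHset] using hfib)
    · exact h
  have hamem : ((0:ℝ), (0:ℝ), a) ∈ G := by
    have : a ∈ H := ha ▸ AddSubgroup.mem_closure_singleton.2 ⟨1, by simp⟩
    exact this
  have hHd : ∀ z : ℝ, (((0:ℝ), (0:ℝ), z) ∈ G) ↔ ∃ m : ℤ, m • a = z := by
    intro z
    constructor
    · intro hz
      have : z ∈ H := hz
      rw [ha, AddSubgroup.mem_closure_singleton] at this
      exact this
    · rintro ⟨m, rfl⟩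
      have := AddSubgroup.zsmul_mem G hamem m
      simpa [Prod.smul_def, smul_zero] using this
  obtain ⟨β, hβ⟩ := hproj 1 0
  obtain ⟨γ, hγ⟩ := hproj 0 1
  push_cast at hβ hγ
  refine ⟨|a|, abs_nonneg a, ?_, β, γ, ?_, hβ, hγ, ?_⟩
  · ext z
    simp only [Set.mem_setOf_eq, hHd]
    constructor
    · rintro ⟨m, rfl⟩
      rcases abs_cases a with ⟨h1, _⟩ | ⟨h1, _⟩
      · exact ⟨m, by rw [h1]; push_cast [zsmul_eq_mul]; ring⟩
      · exact ⟨-m, by rw [h1]; push_cast [zsmul_eq_mul]; ring⟩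
    · rintro ⟨m, rfl⟩
      rcases abs_cases a with ⟨h1, _⟩ | ⟨h1, _⟩
      · exact ⟨m, by rw [h1]; push_cast [zsmul_eq_mul]; ring⟩
      · exact ⟨-m, by rw [h1]; push_cast [zsmul_eq_mul]; ring⟩
  · rcases abs_cases a with ⟨h1, _⟩ | ⟨h1, _⟩
    · rwa [h1]
    · rw [h1]
      simpa using AddSubgroup.neg_mem G hamem
  · have habs : ((0:ℝ), (0:ℝ), |a|) ∈ G := by
      rcases abs_cases a with ⟨h1, _⟩ | ⟨h1, _⟩
      · rwa [h1]
      · rw [h1]; simpa using AddSubgroup.neg_mem G hamem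
    apply le_antisymm
    · -- topological closure of generated subgroup ≤ G
      have hle : AddSubgroup.closure
          ({((0:ℝ), (0:ℝ), |a|), ((1:ℝ), (0:ℝ), β), ((0:ℝ), (1:ℝ), γ)} :
            Set (ℝ × ℝ × ℝ)) ≤ G := by
        rw [AddSubgroup.closure_le]
        rintro v hv
        simp only [Set.mem_insert_iff, Set.mem_singleton_iff] at hv
        rcases hv with rfl | rfl | rfl
        · exact habs
        · exact hβ
        · exact hγ
      exact AddSubgroup.topologicalClosure_minimal _ hle hclosed
    · -- G ≤ generated subgroup (even without topological closure)
      intro v hv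
      obtain ⟨⟨p, hp⟩, q, hq⟩ := hsub hv
      have hmem3 : ((0:ℝ), (0:ℝ), v.2.2 - p • β - q • γ) ∈ G := by
        have h1 := AddSubgroup.sub_mem G (AddSubgroup.sub_mem G hv
          (AddSubgroup.zsmul_mem G hβ p)) (AddSubgroup.zsmul_mem G hγ q)
        have : v - p • ((1:ℝ), (0:ℝ), β) - q • ((0:ℝ), (1:ℝ), γ)
            = ((0:ℝ), (0:ℝ), v.2.2 - p • β - q • γ) := by
          ext <;> simp [Prod.smul_def, hp, hq] <;> ring
        rwa [this] at h1
      obtain ⟨m, hm⟩ := (hHd _).1 hmem3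
      have hma : ∃ m' : ℤ, m' • |a| = m • a := by
        rcases abs_cases a with ⟨h1, _⟩ | ⟨h1, _⟩
        · exact ⟨m, by rw [h1]⟩
        · exact ⟨-m, by rw [h1]; simp⟩
      obtain ⟨m', hm'⟩ := hma
      have hveq : v = m' • ((0:ℝ), (0:ℝ), |a|) + p • ((1:ℝ), (0:ℝ), β)
          + q • ((0:ℝ), (1:ℝ), γ) := by
        ext
        · simp [Prod.smul_def, hp]
        · simp [Prod.smul_def, hq]
        · simp only [Prod.smul_def, Prod.fst_add, Prod.snd_add, smul_eq_mul]
          rw [hm']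
          have := hm
          push_cast at this ⊢
          linarith
      rw [hveq]
      have h1 : ((0:ℝ), (0:ℝ), |a|) ∈ AddSubgroup.closure
          ({((0:ℝ), (0:ℝ), |a|), ((1:ℝ), (0:ℝ), β), ((0:ℝ), (1:ℝ), γ)} :
            Set (ℝ × ℝ × ℝ)) := AddSubgroup.subset_closure (by simp)
      have h2 : ((1:ℝ), (0:ℝ), β) ∈ AddSubgroup.closure
          ({((0:ℝ), (0:ℝ), |a|), ((1:ℝ), (0:ℝ), β), ((0:ℝ), (1:ℝ), γ)} :
            Set (ℝ × ℝ × ℝ)) := AddSubgroup.subset_closure (by simp)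
      have h3 : ((0:ℝ), (1:ℝ), γ) ∈ AddSubgroup.closure
          ({((0:ℝ), (0:ℝ), |a|), ((1:ℝ), (0:ℝ), β), ((0:ℝ), (1:ℝ), γ)} :
            Set (ℝ × ℝ × ℝ)) := AddSubgroup.subset_closure (by simp)
      have := AddSubgroup.add_mem _ (AddSubgroup.add_mem _
        (AddSubgroup.zsmul_mem _ h1 m') (AddSubgroup.zsmul_mem _ h2 p))
        (AddSubgroup.zsmul_mem _ h3 q)
      exact (AddSubgroup.le_topologicalClosure _) this
end
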